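/- There exists a unique c > 2/√3 such that h₁(c) = π/2, where h₁(c) = ∫_{π/3}^{2π/3} (1 − R⁻(c·sin ψ)²)⁻¹ dψ. (This is the analytic content of the existence and uniqueness of the degenerate 'half 4-ray star' shrinker of type DD → CD → CD → CC with 2h₁ = π: h₁ is continuous and strictly decreasing on [2/√3, ∞), with h₁(2/√3) > π/2 and lim_{c→∞} h₁(c) = π/3.) -/

import Mathlib

/-
Along the arc `x = c sin ψ`, `ψ ∈ [π/3, 2π/3]`, one has `x > 1` as soon as `c > 2/√3`, and the
integrand `(1 - R⁻(x)²)⁻¹` is continuous and strictly decreasing in `x`, because `R⁻` inverts the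
strictly decreasing branch of `K` on `(0, 1]`. Hence `h₁` is continuous and strictly decreasing,
and it takes the value `π/2` by the intermediate value theorem once two values are compared with
`π/2`. From `x R⁻(x) = exp ((R⁻(x)² - 1)/2) ≥ (1 + R⁻(x)²)/2` one gets `R⁻(x) ≥ x - √(x² - 1)`,
which bounds the integrand below by `1/2 + x/(2√(x² - 1))`, an arcsine derivative; this gives
`h₁(6/5) > π/2`. And `x R⁻(x) ≤ 1` bounds the integrand by `4/3` once `x ≥ 2`, so `h₁(3) ≤ 4π/9`.
-/

open Real

noncomputable def K (R : ℝ) : ℝ := Real.exp ((R ^ 2 - 1) / 2) / R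

open Set MeasureTheory

lemma hasDerivAt_K {R : ℝ} (hR : R ≠ 0) :
    HasDerivAt K (exp ((R ^ 2 - 1) / 2) * (R ^ 2 - 1) / R ^ 2) R := by
  have hexp : HasDerivAt (fun y : ℝ => exp ((y ^ 2 - 1) / 2)) (exp ((R ^ 2 - 1) / 2) * R) R := by
    simpa using (((hasDerivAt_pow 2 R).sub_const 1).div_const 2).exp
  refine (hexp.div (hasDerivAt_id R) hR).congr_deriv ?_
  simp only [id]
  field_simp

lemma K_one : K 1 = 1 := by simp [K]

lemma K_strictAntiOn : StrictAntiOn K (Ioc 0 1) := by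
  refine strictAntiOn_of_deriv_neg (convex_Ioc 0 1)
    (fun R hR => (hasDerivAt_K hR.1.ne').continuousAt.continuousWithinAt) fun R hR => ?_
  rw [interior_Ioc] at hR
  rw [(hasDerivAt_K hR.1.ne').deriv]
  have : R ^ 2 < 1 := by nlinarith [hR.1, hR.2]
  exact div_neg_of_neg_of_pos (mul_neg_of_pos_of_neg (exp_pos _) (by linarith)) (pow_pos hR.1 2)

lemma one_lt_K {R : ℝ} (h0 : 0 < R) (h1 : R < 1) : 1 < K R :=
  K_one ▸ K_strictAntiOn ⟨h0, h1.le⟩ ⟨one_pos, le_rfl⟩ h1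

lemma cos_two_pi_div_three : cos (2 * π / 3) = -(1 / 2) := by
  rw [show 2 * π / 3 = π - π / 3 by ring, cos_pi_sub, cos_pi_div_three]

lemma abs_cos_le_half {ψ : ℝ} (hψ : ψ ∈ Icc (π / 3) (2 * π / 3)) : |cos ψ| ≤ 1 / 2 := by
  have hlo :=
    cos_le_cos_of_nonneg_of_le_pi (by linarith [pi_pos, hψ.1]) (by linarith [pi_pos]) hψ.2
  have hhi :=
    cos_le_cos_of_nonneg_of_le_pi (by linarith [pi_pos]) (by linarith [pi_pos, hψ.2]) hψ.1
  rw [cos_two_pi_div_three] at hlo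
  rw [cos_pi_div_three] at hhi
  exact abs_le.2 ⟨by linarith, hhi⟩

lemma sqrt_three_div_two_le_sin {ψ : ℝ} (hψ : ψ ∈ Icc (π / 3) (2 * π / 3)) :
    √3 / 2 ≤ sin ψ := by
  have hsin : 0 ≤ sin ψ :=
    sin_nonneg_of_nonneg_of_le_pi (by linarith [pi_pos, hψ.1]) (by linarith [pi_pos, hψ.2])
  have hcos : cos ψ ^ 2 ≤ 1 / 4 := by
    nlinarith [abs_cos_le_half hψ, sq_abs (cos ψ), abs_nonneg (cos ψ)]
  nlinarith [sin_sq_add_cos_sq ψ, sq_sqrt (show (0:ℝ) ≤ 3 by norm_num), sqrt_nonneg 3]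

lemma one_lt_mul_sin {c ψ : ℝ} (hc : 2 / √3 < c) (hψ : ψ ∈ Icc (π / 3) (2 * π / 3)) :
    1 < c * sin ψ := by
  have h3 : 0 < √3 := by positivity
  rw [div_lt_iff₀ h3] at hc
  nlinarith [sqrt_three_div_two_le_sin hψ]

lemma hasDerivAt_arcsin_mul_cos {c ψ : ℝ} (h : 1 < c * sin ψ) :
    HasDerivAt (fun φ => -(1 / 2) * arcsin (c * cos φ / √(c ^ 2 - 1)))
      (c * sin ψ / (2 * √((c * sin ψ) ^ 2 - 1))) ψ := by
  have hpyth := sin_sq_add_cos_sq ψ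
  have hsin2 : 1 < c ^ 2 * sin ψ ^ 2 := by nlinarith
  have hc2 : 1 < c ^ 2 := by nlinarith [sin_sq_le_one ψ]
  set s := √(c ^ 2 - 1)
  have hs : 0 < s := sqrt_pos.2 (by linarith)
  have hs2 : s ^ 2 = c ^ 2 - 1 := sq_sqrt (by linarith)
  set t := √((c * sin ψ) ^ 2 - 1)
  have ht : 0 < t := sqrt_pos.2 (by nlinarith)
  have ht2 : t ^ 2 = (c * sin ψ) ^ 2 - 1 := sq_sqrt (by nlinarith)
  have hu : (c * cos ψ / s) ^ 2 < 1 := by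
    rw [div_pow, div_lt_one (by positivity)]
    nlinarith
  have hu1 : c * cos ψ / s ≠ -1 := by intro h; rw [h] at hu; norm_num at hu
  have hu2 : c * cos ψ / s ≠ 1 := by intro h; rw [h] at hu; norm_num at hu
  have hsqrt : √(1 - (c * cos ψ / s) ^ 2) = t / s := by
    rw [← sqrt_sq (by positivity : 0 ≤ t / s)]
    congr 1
    field_simp
    nlinarith
  have hinner : HasDerivAt (fun φ => c * cos φ / s) (c * -sin ψ / s) ψ :=
    ((hasDerivAt_cos ψ).const_mul c).div_const s
  refine (((hasDerivAt_arcsin hu1 hu2).comp ψ hinner).const_mul (-(1 / 2))).congr_deriv ?_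
  rw [hsqrt]
  field_simp

lemma continuousOn_mul_sin_div_sqrt {c : ℝ} (hc : 2 / √3 < c) :
    ContinuousOn (fun ψ => c * sin ψ / (2 * √((c * sin ψ) ^ 2 - 1)))
      (Icc (π / 3) (2 * π / 3)) := by
  refine ContinuousOn.div (by fun_prop) (by fun_prop) fun ψ hψ => ?_
  have := one_lt_mul_sin hc hψ
  have : 0 < √((c * sin ψ) ^ 2 - 1) := sqrt_pos.2 (by nlinarith)
  positivity

lemma integral_mul_sin_div_sqrt {c : ℝ} (hc : 2 / √3 < c) :
    ∫ ψ in (π / 3)..(2 * π / 3), c * sin ψ / (2 * √((c * sin ψ) ^ 2 - 1)) =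
      arcsin (c / (2 * √(c ^ 2 - 1))) := by
  have hle : π / 3 ≤ 2 * π / 3 := by linarith [pi_pos]
  rw [intervalIntegral.integral_eq_sub_of_hasDerivAt
    (fun ψ hψ => hasDerivAt_arcsin_mul_cos (one_lt_mul_sin hc (by rwa [uIcc_of_le hle] at hψ)))
    ((continuousOn_mul_sin_div_sqrt hc).intervalIntegrable_of_Icc hle), cos_two_pi_div_three,
    cos_pi_div_three,
    show c * -(1 / 2) / √(c ^ 2 - 1) = -(c / (2 * √(c ^ 2 - 1))) by ring, arcsin_neg]
  ring_nf

-- The paper's `h₁(c)`, with `Rm` standing for `R⁻`.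
noncomputable def polarAngleCD (Rm : ℝ → ℝ) (c : ℝ) : ℝ :=
  ∫ ψ in (π / 3)..(2 * π / 3), (1 - Rm (c * sin ψ) ^ 2)⁻¹

section LowerBranch

variable {Rm : ℝ → ℝ} (hRm : ∀ x : ℝ, 1 < x → 0 < Rm x ∧ Rm x < 1 ∧ K (Rm x) = x)
include hRm

lemma Rm_K {R : ℝ} (h0 : 0 < R) (h1 : R < 1) : Rm (K R) = R := by
  obtain ⟨h0', h1', hK⟩ := hRm (K R) (one_lt_K h0 h1)
  exact K_strictAntiOn.injOn ⟨h0', h1'.le⟩ ⟨h0, h1.le⟩ hK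

lemma Rm_strictAntiOn : StrictAntiOn Rm (Ioi 1) := by
  intro x hx y hy hxy
  obtain ⟨hx0, hx1, hKx⟩ := hRm x hx
  obtain ⟨hy0, hy1, hKy⟩ := hRm y hy
  refine lt_of_not_ge fun h => hxy.not_ge ?_
  simpa only [hKx, hKy] using K_strictAntiOn.antitoneOn ⟨hx0, hx1.le⟩ ⟨hy0, hy1.le⟩ h

-- A strictly monotone map whose image is an open interval is continuous; apply this to `-Rm`.
lemma Rm_continuousOn : ContinuousOn Rm (Ioi 1) := by
  have hmono : StrictMonoOn (fun x => -Rm x) (Ioi 1) :=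
    fun x hx y hy hxy => neg_lt_neg (Rm_strictAntiOn hRm hx hy hxy)
  have himage : Ioo (-1) 0 ⊆ (fun x => -Rm x) '' Ioi 1 := by
    rintro y ⟨hy1, hy0⟩
    exact ⟨K (-y), one_lt_K (by linarith) (by linarith), by
      simp only [Rm_K hRm (neg_pos.2 hy0) (by linarith : -y < 1), neg_neg]⟩
  intro x hx
  obtain ⟨h0, h1, -⟩ := hRm x hx
  have hcont := hmono.continuousAt_of_image_mem_nhds (Ioi_mem_nhds hx)
    (Filter.mem_of_superset (Ioo_mem_nhds (by linarith) (by linarith)) himage)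
  have : ContinuousAt (fun y => - -Rm y) x := hcont.neg
  simp only [neg_neg] at this
  exact this.continuousWithinAt

lemma mul_Rm {x : ℝ} (hx : 1 < x) : x * Rm x = exp ((Rm x ^ 2 - 1) / 2) := by
  obtain ⟨h0, -, hK⟩ := hRm x hx
  rw [K, div_eq_iff h0.ne'] at hK
  exact hK.symm

lemma sub_sqrt_le_Rm {x : ℝ} (hx : 1 < x) : x - √(x ^ 2 - 1) ≤ Rm x := by
  have hquad : (1 + Rm x ^ 2) / 2 ≤ x * Rm x := by
    rw [mul_Rm hRm hx]
    linarith [add_one_le_exp ((Rm x ^ 2 - 1) / 2)]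
  have := (le_abs_self _).trans (abs_le_sqrt (by nlinarith : (x - Rm x) ^ 2 ≤ x ^ 2 - 1))
  linarith

lemma Rm_le_inv {x : ℝ} (hx : 1 < x) : Rm x ≤ x⁻¹ := by
  obtain ⟨h0, h1, -⟩ := hRm x hx
  have : x * Rm x ≤ 1 := by
    rw [mul_Rm hRm hx, exp_le_one_iff]
    nlinarith
  rw [← one_div, le_div_iff₀ (by linarith)]
  linarith [mul_comm x (Rm x)]

lemma continuousOn_inv_one_sub_Rm_sq : ContinuousOn (fun x => (1 - Rm x ^ 2)⁻¹) (Ioi 1) :=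
  (continuousOn_const.sub ((Rm_continuousOn hRm).pow 2)).inv₀ fun x hx => by
    obtain ⟨h0, h1, -⟩ := hRm x hx
    exact (show 0 < 1 - Rm x ^ 2 by nlinarith).ne'

lemma inv_one_sub_Rm_sq_strictAntiOn : StrictAntiOn (fun x => (1 - Rm x ^ 2)⁻¹) (Ioi 1) := by
  intro x hx y hy hxy
  obtain ⟨hx0, hx1, -⟩ := hRm x hx
  obtain ⟨hy0, -, -⟩ := hRm y hy
  have := Rm_strictAntiOn hRm hx hy hxy
  exact inv_strictAnti₀ (by nlinarith) (by nlinarith)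

lemma le_inv_one_sub_Rm_sq {x : ℝ} (hx : 1 < x) :
    1 / 2 + x / (2 * √(x ^ 2 - 1)) ≤ (1 - Rm x ^ 2)⁻¹ := by
  obtain ⟨-, h1, -⟩ := hRm x hx
  have hR := sub_sqrt_le_Rm hRm hx
  set s := √(x ^ 2 - 1)
  have hs : 0 < s := sqrt_pos.2 (by nlinarith)
  have hs2 : s ^ 2 = x ^ 2 - 1 := sq_sqrt (by nlinarith)
  have hxs : 0 < x - s := by nlinarith
  calc 1 / 2 + x / (2 * s) = (2 * s * (x - s))⁻¹ := by
        field_simp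
        nlinarith
    _ ≤ (1 - Rm x ^ 2)⁻¹ := inv_anti₀ (by nlinarith) (by nlinarith)

lemma inv_one_sub_Rm_sq_le {x : ℝ} (hx : 2 ≤ x) : (1 - Rm x ^ 2)⁻¹ ≤ 4 / 3 := by
  obtain ⟨h0, -, -⟩ := hRm x (by linarith)
  have hR : Rm x ≤ 2⁻¹ := (Rm_le_inv hRm (by linarith)).trans (inv_anti₀ two_pos hx)
  calc (1 - Rm x ^ 2)⁻¹ ≤ (3 / 4)⁻¹ := inv_anti₀ (by norm_num) (by nlinarith)
    _ = 4 / 3 := by norm_num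

lemma continuousOn_polarAngleCD_integrand {c : ℝ} (hc : 2 / √3 < c) :
    ContinuousOn (fun ψ => (1 - Rm (c * sin ψ) ^ 2)⁻¹) (Icc (π / 3) (2 * π / 3)) :=
  (continuousOn_inv_one_sub_Rm_sq hRm).comp (by fun_prop) fun _ hψ => one_lt_mul_sin hc hψ

lemma intervalIntegrable_polarAngleCD_integrand {c : ℝ} (hc : 2 / √3 < c) :
    IntervalIntegrable (fun ψ => (1 - Rm (c * sin ψ) ^ 2)⁻¹) volume (π / 3) (2 * π / 3) :=
  (continuousOn_polarAngleCD_integrand hRm hc).intervalIntegrable_of_Icc (by linarith [pi_pos])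

lemma polarAngleCD_strictAntiOn : StrictAntiOn (polarAngleCD Rm) (Ioi (2 / √3)) := by
  intro a ha b hb hab
  have hpi : π / 3 < 2 * π / 3 := by linarith [pi_pos]
  have hlt : ∀ ψ ∈ Icc (π / 3) (2 * π / 3),
      (1 - Rm (b * sin ψ) ^ 2)⁻¹ < (1 - Rm (a * sin ψ) ^ 2)⁻¹ := fun ψ hψ =>
    inv_one_sub_Rm_sq_strictAntiOn hRm (one_lt_mul_sin ha hψ) (one_lt_mul_sin hb hψ)
      (mul_lt_mul_of_pos_right hab ((by positivity : 0 < √3 / 2).trans_le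
        (sqrt_three_div_two_le_sin hψ)))
  exact intervalIntegral.integral_lt_integral_of_continuousOn_of_le_of_exists_lt hpi
    (continuousOn_polarAngleCD_integrand hRm hb) (continuousOn_polarAngleCD_integrand hRm ha)
    (fun ψ hψ => (hlt ψ (Ioc_subset_Icc_self hψ)).le)
    ⟨π / 3, left_mem_Icc.2 hpi.le, hlt _ (left_mem_Icc.2 hpi.le)⟩

lemma continuousOn_polarAngleCD {a : ℝ} (ha : 2 / √3 < a) :
    ContinuousOn (polarAngleCD Rm) (Ici a) := by
  have hle : π / 3 ≤ 2 * π / 3 := by linarith [pi_pos]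
  have hm : 1 < a * (√3 / 2) := by
    simpa only [sin_pi_div_three] using one_lt_mul_sin ha (left_mem_Icc.2 hle)
  -- Clamping the argument of `Rm` at `a √3 / 2` makes the integrand jointly continuous in `(c, ψ)`
  -- without changing it for `c ≥ a`.
  have hH : Continuous
      (Function.uncurry fun c ψ => (1 - Rm (max (c * sin ψ) (a * (√3 / 2))) ^ 2)⁻¹) :=
    (continuousOn_inv_one_sub_Rm_sq hRm).comp_continuous (by fun_prop)
      fun _ => hm.trans_le (le_max_right _ _)
  refine (intervalIntegral.continuous_parametric_intervalIntegral_of_continuous' hH _ _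
    ).continuousOn.congr fun c hc => intervalIntegral.integral_congr fun ψ hψ => ?_
  rw [uIcc_of_le hle] at hψ
  have hc0 : 0 < c := ((by positivity : 0 < 2 / √3).trans ha).trans_le hc
  have : a * (√3 / 2) ≤ c * sin ψ :=
    mul_le_mul hc (sqrt_three_div_two_le_sin hψ) (by positivity) hc0.le
  simp only [max_eq_left this]

lemma pi_div_six_add_arcsin_le_polarAngleCD {c : ℝ} (hc : 2 / √3 < c) :
    π / 6 + arcsin (c / (2 * √(c ^ 2 - 1))) ≤ polarAngleCD Rm c := by
  have hle : π / 3 ≤ 2 * π / 3 := by linarith [pi_pos]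
  have hint := (continuousOn_mul_sin_div_sqrt hc).intervalIntegrable_of_Icc (μ := volume) hle
  calc π / 6 + arcsin (c / (2 * √(c ^ 2 - 1)))
      = ∫ ψ in (π / 3)..(2 * π / 3), (1 / 2 + c * sin ψ / (2 * √((c * sin ψ) ^ 2 - 1))) := by
        rw [intervalIntegral.integral_add (intervalIntegrable_const (μ := volume)) hint,
          integral_mul_sin_div_sqrt hc, intervalIntegral.integral_const, smul_eq_mul]
        ring
    _ ≤ polarAngleCD Rm c :=
      intervalIntegral.integral_mono_on hle (intervalIntegrable_const.add hint)
        (intervalIntegrable_polarAngleCD_integrand hRm hc)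
        fun ψ hψ => le_inv_one_sub_Rm_sq hRm (one_lt_mul_sin hc hψ)

lemma pi_div_two_lt_polarAngleCD {c : ℝ} (hc : 2 / √3 < c) (hc' : c ^ 2 < 3 / 2) :
    π / 2 < polarAngleCD Rm c := by
  have h3 : 0 < √3 := by positivity
  have hc0 : 0 < c := (by positivity : 0 < 2 / √3).trans hc
  have hc2 : 4 < 3 * c ^ 2 := by
    rw [div_lt_iff₀ h3] at hc
    nlinarith [sq_sqrt (show (0:ℝ) ≤ 3 by norm_num)]
  set s := √(c ^ 2 - 1)
  have hs : 0 < s := sqrt_pos.2 (by nlinarith)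
  have hs2 : s ^ 2 = c ^ 2 - 1 := sq_sqrt (by nlinarith)
  have hsc : √3 * s < c := by
    refine lt_of_pow_lt_pow_left₀ 2 hc0.le ?_
    rw [mul_pow, sq_sqrt (by norm_num), hs2]
    linarith
  have harcsin : π / 3 < arcsin (c / (2 * s)) := by
    rw [lt_arcsin_iff_sin_lt' ⟨by linarith [pi_pos], by linarith [pi_pos]⟩, sin_pi_div_three,
      div_lt_div_iff₀ two_pos (by positivity)]
    linarith
  linarith [pi_div_six_add_arcsin_le_polarAngleCD hRm hc]

lemma polarAngleCD_lt_pi_div_two {c : ℝ} (hc : 4 / √3 ≤ c) : polarAngleCD Rm c < π / 2 := by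
  have hle : π / 3 ≤ 2 * π / 3 := by linarith [pi_pos]
  have h3 : 0 < √3 := by positivity
  have hc' : 2 / √3 < c := (div_lt_div_of_pos_right (by norm_num) h3).trans_le hc
  rw [div_le_iff₀ h3] at hc
  calc polarAngleCD Rm c ≤ ∫ _ in (π / 3)..(2 * π / 3), (4 / 3 : ℝ) :=
        intervalIntegral.integral_mono_on hle (intervalIntegrable_polarAngleCD_integrand hRm hc')
          intervalIntegrable_const fun ψ hψ =>
            inv_one_sub_Rm_sq_le hRm (by nlinarith [sqrt_three_div_two_le_sin hψ])
    _ < π / 2 := by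
        rw [intervalIntegral.integral_const, smul_eq_mul]
        linarith [pi_pos]

end LowerBranch

theorem stmt_19 (Rm : ℝ → ℝ)
    (hRm : ∀ x : ℝ, 1 < x → 0 < Rm x ∧ Rm x < 1 ∧ K (Rm x) = x) :
    ∃! c : ℝ, 2 / Real.sqrt 3 < c ∧
      (∫ ψ in (π / 3)..(2 * π / 3), (1 - (Rm (c * Real.sin ψ)) ^ 2)⁻¹) = π / 2 := by
  have hsqrt3 : 5 / 3 < √3 := by
    rw [lt_sqrt (by norm_num)]
    norm_num
  have hlow : 2 / √3 < 6 / 5 := by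
    rw [div_lt_iff₀ (by positivity)]
    linarith
  have hhigh : 4 / √3 ≤ 3 := by
    rw [div_le_iff₀ (by positivity)]
    linarith
  obtain ⟨c, hc, hc_eq⟩ := intermediate_value_Icc' (by norm_num : (6 / 5 : ℝ) ≤ 3)
    ((continuousOn_polarAngleCD hRm hlow).mono Icc_subset_Ici_self)
    ⟨(polarAngleCD_lt_pi_div_two hRm hhigh).le,
      (pi_div_two_lt_polarAngleCD hRm hlow (by norm_num)).le⟩
  have hc_gt : 2 / √3 < c := hlow.trans_le hc.1
  exact ⟨c, ⟨hc_gt, hc_eq⟩, fun c' hc' =>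
    (polarAngleCD_strictAntiOn hRm).injOn hc'.1 hc_gt (hc'.2.trans hc_eq.symm)⟩
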